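/- arXiv:math/0610030 — 2 statements merged into one kernel-verified Lean document; each statement's English description precedes it below -/
import Mathlib

section
/- Let A = {a₁ < a₂ < ⋯ < a_k} be a finite set of positive integers with k ≥ 2, let A' = A ∖ {a_k}, and let τ be the POP 1'-2-1''. Then for all m ≥ 2 and all n ≥ 0: |C_{n;m}^A(τ)| − 2·|C_{n−a_k; m−1}^A(τ)| + |C_{n−2a_k; m−2}^A(τ)| = |C_{n;m}^{A'}(τ)|, where a count |C_{n';m'}| is taken to be 0 when n' < 0. -/
/-- `σ` contains the POP 1'-2-1'': there are indices `i < j` with `j+1` still a valid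
position, such that `σ i < σ j` and `σ (j+1) < σ j` (0-indexed). -/
def Contains121 (σ : List ℕ) : Prop :=
  ∃ i j : ℕ, i < j ∧ j + 1 < σ.length ∧
    σ.getD i 0 < σ.getD j 0 ∧ σ.getD (j + 1) 0 < σ.getD j 0

/-- The number of compositions of `n : ℤ` (zero when `n < 0`) with `m` parts in `A`
avoiding 1'-2-1''. -/
noncomputable def count121 (A : Finset ℕ) (n : ℤ) (m : ℕ) : ℕ :=
  Set.ncard {σ : List ℕ |
    (∀ x ∈ σ, x ∈ A) ∧ (σ.sum : ℤ) = n ∧ σ.length = m ∧ ¬ Contains121 σ}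

def AvSet (A : Finset ℕ) (n : ℤ) (m : ℕ) : Set (List ℕ) :=
  {σ : List ℕ | (∀ x ∈ σ, x ∈ A) ∧ (σ.sum : ℤ) = n ∧ σ.length = m ∧ ¬ Contains121 σ}

lemma count121_eq (A : Finset ℕ) (n : ℤ) (m : ℕ) :
    count121 A n m = (AvSet A n m).ncard := rfl

lemma getD_mem (σ : List ℕ) {k : ℕ} (h : k < σ.length) : σ.getD k 0 ∈ σ := by
  rw [List.getD_eq_getElem _ _ h]; exact List.getElem_mem h

-- tail of avoider avoids
lemma avoid_tail {x : ℕ} {σ : List ℕ} (h : ¬ Contains121 (x :: σ)) : ¬ Contains121 σ := by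
  intro ⟨i, j, hij, hj, h1, h2⟩
  refine h ⟨i + 1, j + 1, by omega, by simpa using Nat.succ_lt_succ hj, ?_, ?_⟩ <;>
    simp only [List.getD_cons_succ] <;> assumption

-- dropLast of avoider avoids
lemma avoid_dropLast {x : ℕ} {σ : List ℕ} (h : ¬ Contains121 (σ ++ [x])) :
    ¬ Contains121 σ := by
  intro ⟨i, j, hij, hj, h1, h2⟩
  refine h ⟨i, j, hij, ?_, ?_, ?_⟩
  · simp only [List.length_append, List.length_singleton]; omega
  · rwa [List.getD_append _ _ _ _ (by omega), List.getD_append _ _ _ _ (by omega)]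
  · rwa [List.getD_append _ _ _ _ (by omega), List.getD_append _ _ _ _ (by omega)]

-- prepending the max preserves avoidance
lemma avoid_cons_max {a : ℕ} {σ : List ℕ} (hle : ∀ x ∈ σ, x ≤ a)
    (h : ¬ Contains121 σ) : ¬ Contains121 (a :: σ) := by
  intro ⟨i, j, hij, hj, h1, h2⟩
  simp only [List.length_cons] at hj
  rcases Nat.eq_zero_or_pos i with hi | hi
  · subst hi
    have hjlen : j - 1 < σ.length := by omega
    have : (a :: σ).getD j 0 = σ.getD (j - 1) 0 := by
      obtain ⟨j', rfl⟩ : ∃ j', j = j' + 1 := ⟨j - 1, by omega⟩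
      simp only [List.getD_cons_succ, Nat.add_sub_cancel]
    rw [this] at h1
    exact absurd h1 (not_lt.2 (hle _ (getD_mem _ hjlen)))
  · obtain ⟨i', rfl⟩ : ∃ i', i = i' + 1 := ⟨i - 1, by omega⟩
    obtain ⟨j', rfl⟩ : ∃ j', j = j' + 1 := ⟨j - 1, by omega⟩
    refine h ⟨i', j', by omega, by omega, ?_, ?_⟩
    · simpa only [List.getD_cons_succ] using h1
    · simpa only [List.getD_cons_succ] using h2

-- appending the max preserves avoidance
lemma avoid_concat_max {a : ℕ} {σ : List ℕ} (hle : ∀ x ∈ σ, x ≤ a)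
    (h : ¬ Contains121 σ) : ¬ Contains121 (σ ++ [a]) := by
  intro ⟨i, j, hij, hj, h1, h2⟩
  simp only [List.length_append, List.length_singleton] at hj
  rcases lt_or_ge (j + 1) σ.length with hlt | hge
  · refine h ⟨i, j, hij, hlt, ?_, ?_⟩
    · rwa [List.getD_append _ _ _ _ (by omega), List.getD_append _ _ _ _ (by omega)] at h1
    · rwa [List.getD_append _ _ _ _ (by omega), List.getD_append _ _ _ _ (by omega)] at h2
  · have hj1 : j + 1 = σ.length := by omega
    have hja : (σ ++ [a]).getD (j + 1) 0 = a := by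
      rw [List.getD_append_right _ _ _ _ (by omega), hj1]
      simp
    have hjm : (σ ++ [a]).getD j 0 = σ.getD j 0 := List.getD_append _ _ _ _ (by omega)
    rw [hja, hjm] at h2
    exact absurd h2 (not_lt.2 (hle _ (getD_mem _ (by omega))))

-- key: in an avoider, the max can only occur at the ends
lemma max_at_ends {a : ℕ} {σ : List ℕ} (hle : ∀ x ∈ σ, x ≤ a)
    (h : ¬ Contains121 σ) (hmem : a ∈ σ) :
    σ.getD 0 0 = a ∨ σ.getD (σ.length - 1) 0 = a := by
  by_contra hc
  push_neg at hc
  obtain ⟨h0, hl⟩ := hc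
  set F := (Finset.range σ.length).filter (fun k => σ.getD k 0 = a) with hF
  have hne : F.Nonempty := by
    obtain ⟨k, hk, hka⟩ := List.mem_iff_getElem.1 hmem
    exact ⟨k, Finset.mem_filter.2 ⟨Finset.mem_range.2 hk,
      by rw [List.getD_eq_getElem _ _ hk]; exact hka⟩⟩
  set s := F.min' hne with hs
  set t := F.max' hne with ht
  have hsF : s ∈ F := F.min'_mem hne
  have htF : t ∈ F := F.max'_mem hne
  rw [hF] at hsF htF
  rw [Finset.mem_filter, Finset.mem_range] at hsF htF
  have hs1 : 1 ≤ s := by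
    rcases Nat.eq_zero_or_pos s with h' | h'
    · rw [h'] at hsF; exact absurd hsF.2 h0
    · exact h'
  have htl : t < σ.length - 1 := by
    have h' : t ≠ σ.length - 1 := fun h' => hl (h' ▸ htF.2)
    omega
  have hst : s ≤ t := F.min'_le t (F.max'_mem hne)
  have hs' : σ.getD (s - 1) 0 < a := by
    have hmem' := getD_mem σ (show s - 1 < σ.length by omega)
    have hne' : σ.getD (s - 1) 0 ≠ a := by
      intro h'
      have : s ≤ s - 1 := F.min'_le _ (Finset.mem_filter.2 ⟨Finset.mem_range.2 (by omega), h'⟩)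
      omega
    exact lt_of_le_of_ne (hle _ hmem') hne'
  have ht' : σ.getD (t + 1) 0 < a := by
    have hmem' := getD_mem σ (show t + 1 < σ.length by omega)
    have hne' : σ.getD (t + 1) 0 ≠ a := by
      intro h'
      have : t + 1 ≤ t := F.le_max' _ (Finset.mem_filter.2 ⟨Finset.mem_range.2 (by omega), h'⟩)
      omega
    exact lt_of_le_of_ne (hle _ hmem') hne'
  exact h ⟨s - 1, t, by omega, by omega, by rw [htF.2]; exact hs', by rw [htF.2]; exact ht'⟩

lemma finite_len_mem (A : Finset ℕ) :
    ∀ m : ℕ, {l : List ℕ | (∀ x ∈ l, x ∈ A) ∧ l.length = m}.Finite := by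
  intro m
  induction m with
  | zero =>
    refine Set.Finite.subset (Set.finite_singleton []) ?_
    rintro l ⟨-, hl⟩
    simp [List.length_eq_zero_iff.1 hl]
  | succ m ih =>
    refine Set.Finite.subset ((A.finite_toSet.prod ih).image fun p => p.1 :: p.2) ?_
    rintro l ⟨hmem, hl⟩
    cases l with
    | nil => simp at hl
    | cons x l' =>
      exact ⟨(x, l'), ⟨hmem x (by simp), fun y hy => hmem y (by simp [hy]), by simpa using hl⟩,
        rfl⟩

lemma finite_avset (A : Finset ℕ) (n : ℤ) (m : ℕ) : (AvSet A n m).Finite :=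
  (finite_len_mem A m).subset fun σ hσ => ⟨hσ.1, hσ.2.2.1⟩

lemma sum_cons_cast (x : ℕ) (τ : List ℕ) : (((x :: τ).sum : ℕ) : ℤ) = (x : ℤ) + (τ.sum : ℤ) := by
  rw [List.sum_cons, Nat.cast_add]

lemma sum_concat_cast (τ : List ℕ) (x : ℕ) :
    (((τ ++ [x]).sum : ℕ) : ℤ) = (τ.sum : ℤ) + (x : ℤ) := by
  rw [List.sum_append, List.sum_cons, List.sum_nil, Nat.add_zero, Nat.cast_add]

lemma getD_concat_self (τ : List ℕ) (a : ℕ) : (τ ++ [a]).getD τ.length 0 = a := by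
  rw [List.getD_append_right _ _ _ _ le_rfl, Nat.sub_self]
  rfl

lemma headSet_eq {A : Finset ℕ} {a : ℕ} (ha : a ∈ A) (hmax : ∀ x ∈ A, x ≤ a)
    {n : ℤ} {m : ℕ} (hm : 1 ≤ m) :
    AvSet A n m ∩ {σ | σ.getD 0 0 = a} = (fun τ => a :: τ) '' AvSet A (n - a) (m - 1) := by
  ext σ
  constructor
  · rintro ⟨⟨hmem, hsum, hlen, hav⟩, hhead⟩
    have hσne : σ ≠ [] := by
      intro h'; rw [h'] at hlen; simp at hlen; omega
    obtain ⟨x, τ, rfl⟩ := List.exists_cons_of_ne_nil hσne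
    have hx : a = x := by simpa using hhead.symm
    subst hx
    refine ⟨τ, ⟨fun y hy => hmem y (List.mem_cons_of_mem _ hy), ?_, ?_, avoid_tail hav⟩, rfl⟩
    · rw [sum_cons_cast] at hsum
      omega
    · simp only [List.length_cons] at hlen
      omega
  · rintro ⟨τ, ⟨hmem, hsum, hlen, hav⟩, rfl⟩
    refine ⟨⟨?_, ?_, ?_, avoid_cons_max (fun x hx => hmax x (hmem x hx)) hav⟩, rfl⟩
    · intro x hx
      rcases List.mem_cons.1 hx with h' | h'
      · exact h' ▸ ha
      · exact hmem x h'
    · rw [sum_cons_cast]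
      omega
    · simp only [List.length_cons]
      omega

lemma lastSet_eq {A : Finset ℕ} {a : ℕ} (ha : a ∈ A) (hmax : ∀ x ∈ A, x ≤ a)
    {n : ℤ} {m : ℕ} (hm : 1 ≤ m) :
    AvSet A n m ∩ {σ | σ.getD (σ.length - 1) 0 = a}
      = (fun τ => τ ++ [a]) '' AvSet A (n - a) (m - 1) := by
  ext σ
  constructor
  · rintro ⟨⟨hmem, hsum, hlen, hav⟩, hlast⟩
    rcases σ.eq_nil_or_concat' with rfl | ⟨τ, b, rfl⟩
    · simp at hlen; omega
    have hb : b = a := by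
      have h' : (τ ++ [b]).getD ((τ ++ [b]).length - 1) 0 = a := hlast
      rwa [show (τ ++ [b]).length - 1 = τ.length by simp, getD_concat_self] at h'
    subst hb
    refine ⟨τ, ⟨fun y hy => hmem y (by simp [hy]), ?_, ?_, avoid_dropLast hav⟩, rfl⟩
    · rw [sum_concat_cast] at hsum
      omega
    · simp only [List.length_append, List.length_singleton, List.length_nil] at hlen
      omega
  · rintro ⟨τ, ⟨hmem, hsum, hlen, hav⟩, rfl⟩
    refine ⟨⟨?_, ?_, ?_, avoid_concat_max (fun x hx => hmax x (hmem x hx)) hav⟩, ?_⟩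
    · intro x hx
      rcases List.mem_append.1 hx with h' | h'
      · exact hmem x h'
      · exact (List.mem_singleton.1 h') ▸ ha
    · rw [sum_concat_cast]
      omega
    · simp only [List.length_append, List.length_singleton]
      omega
    · show (τ ++ [a]).getD ((τ ++ [a]).length - 1) 0 = a
      rw [show (τ ++ [a]).length - 1 = τ.length by simp, getD_concat_self]

lemma bothSet_eq {A : Finset ℕ} {a : ℕ} (ha : a ∈ A) (hmax : ∀ x ∈ A, x ≤ a)
    {n : ℤ} {m : ℕ} (hm : 2 ≤ m) :
    AvSet A n m ∩ {σ | σ.getD 0 0 = a} ∩ {σ | σ.getD (σ.length - 1) 0 = a}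
      = (fun τ => a :: (τ ++ [a])) '' AvSet A (n - 2 * a) (m - 2) := by
  ext σ
  constructor
  · rintro ⟨⟨⟨hmem, hsum, hlen, hav⟩, hhead⟩, hlast⟩
    have hσne : σ ≠ [] := by
      intro h'; rw [h'] at hlen; simp at hlen; omega
    obtain ⟨x, ρ, rfl⟩ := List.exists_cons_of_ne_nil hσne
    have hx : a = x := by simpa using hhead.symm
    subst hx
    rcases ρ.eq_nil_or_concat' with rfl | ⟨τ, b, rfl⟩
    · simp at hlen; omega
    have hb : b = a := by
      have h' : (a :: (τ ++ [b])).getD ((a :: (τ ++ [b])).length - 1) 0 = a := hlast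
      rwa [show (a :: (τ ++ [b])).length - 1 = τ.length + 1 by simp,
        List.getD_cons_succ, getD_concat_self] at h'
    subst hb
    refine ⟨τ, ⟨fun y hy => hmem y (by simp [hy]), ?_, ?_,
      avoid_dropLast (avoid_tail hav)⟩, rfl⟩
    · rw [sum_cons_cast, sum_concat_cast] at hsum
      omega
    · simp only [List.length_cons, List.length_append, List.length_singleton, List.length_nil] at hlen
      omega
  · rintro ⟨τ, ⟨hmem, hsum, hlen, hav⟩, rfl⟩
    have hmem' : ∀ x ∈ τ ++ [a], x ∈ A := by
      intro x hx
      rcases List.mem_append.1 hx with h' | h'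
      · exact hmem x h'
      · exact (List.mem_singleton.1 h') ▸ ha
    refine ⟨⟨⟨?_, ?_, ?_, avoid_cons_max (fun x hx => hmax x (hmem' x hx))
      (avoid_concat_max (fun x hx => hmax x (hmem x hx)) hav)⟩, rfl⟩, ?_⟩
    · intro x hx
      rcases List.mem_cons.1 hx with h' | h'
      · exact h' ▸ ha
      · exact hmem' x h'
    · rw [sum_cons_cast, sum_concat_cast]
      omega
    · simp only [List.length_cons, List.length_append, List.length_singleton, List.length_nil]
      omega
    · show (a :: (τ ++ [a])).getD ((a :: (τ ++ [a])).length - 1) 0 = a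
      rw [show (a :: (τ ++ [a])).length - 1 = τ.length + 1 by simp,
        List.getD_cons_succ, getD_concat_self]

lemma avset_partition {A : Finset ℕ} {a : ℕ} (ha : a ∈ A) (hmax : ∀ x ∈ A, x ≤ a)
    (n : ℤ) (m : ℕ) :
    AvSet A n m = AvSet (A.erase a) n m ∪
      (AvSet A n m ∩ {σ | σ.getD 0 0 = a}
        ∪ AvSet A n m ∩ {σ | σ.getD (σ.length - 1) 0 = a}) := by
  apply Set.Subset.antisymm
  · rintro σ ⟨hmem, hsum, hlen, hav⟩
    by_cases hmem_a : a ∈ σ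
    · rcases max_at_ends (fun x hx => hmax x (hmem x hx)) hav hmem_a with h' | h'
      · exact Or.inr (Or.inl ⟨⟨hmem, hsum, hlen, hav⟩, h'⟩)
      · exact Or.inr (Or.inr ⟨⟨hmem, hsum, hlen, hav⟩, h'⟩)
    · exact Or.inl ⟨fun x hx => Finset.mem_erase.2 ⟨fun h' => hmem_a (h' ▸ hx), hmem x hx⟩,
        hsum, hlen, hav⟩
  · rintro σ (⟨hmem, hsum, hlen, hav⟩ | (⟨h, -⟩ | ⟨h, -⟩))
    · exact ⟨fun x hx => Finset.mem_of_mem_erase (hmem x hx), hsum, hlen, hav⟩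
    · exact h
    · exact h

theorem stmt2 (A : Finset ℕ) (hcard : 2 ≤ A.card) (hpos : ∀ a ∈ A, 0 < a)
    (hA : A.Nonempty) (ak : ℕ) (hak : ak = A.max' hA) :
    ∀ m : ℕ, 2 ≤ m → ∀ n : ℤ, 0 ≤ n →
      (count121 A n m : ℤ) - 2 * (count121 A (n - ak) (m - 1) : ℤ)
          + (count121 A (n - 2 * ak) (m - 2) : ℤ)
        = (count121 (A.erase ak) n m : ℤ) := by
  intro m hm n _hn
  have haA : ak ∈ A := hak ▸ A.max'_mem hA
  have hmax : ∀ x ∈ A, x ≤ ak := fun x hx => hak ▸ A.le_max' x hx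
  have hfin := finite_avset A n m
  set T1 := AvSet A n m ∩ {σ | σ.getD 0 0 = ak} with hT1
  set T2 := AvSet A n m ∩ {σ | σ.getD (σ.length - 1) 0 = ak} with hT2
  have hfin1 : T1.Finite := hfin.subset Set.inter_subset_left
  have hfin2 : T2.Finite := hfin.subset Set.inter_subset_left
  have hfinU : (T1 ∪ T2).Finite := hfin1.union hfin2
  have hfin' : (AvSet (A.erase ak) n m).Finite := finite_avset _ n m
  have hdisj : Disjoint (AvSet (A.erase ak) n m) (T1 ∪ T2) := by
    rw [Set.disjoint_left]
    rintro σ ⟨hmem, -, hlen, -⟩ hσ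
    have hnot : ak ∉ σ := fun h' => (Finset.mem_erase.1 (hmem ak h')).1 rfl
    have hlen0 : 0 < σ.length := by omega
    rcases hσ with ⟨-, h⟩ | ⟨-, h⟩
    · exact hnot (h ▸ getD_mem σ hlen0)
    · exact hnot (h ▸ getD_mem σ (by omega))
  have e1 : (AvSet A n m).ncard = (AvSet (A.erase ak) n m).ncard + (T1 ∪ T2).ncard := by
    rw [hT1, hT2, ← Set.ncard_union_eq hdisj hfin' hfinU,
      ← avset_partition haA hmax n m]
  have e2 : (T1 ∪ T2).ncard + (T1 ∩ T2).ncard = T1.ncard + T2.ncard :=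
    Set.ncard_union_add_ncard_inter T1 T2 hfin1 hfin2
  have e3 : T1.ncard = (AvSet A (n - ak) (m - 1)).ncard := by
    rw [hT1, headSet_eq haA hmax (by omega)]
    exact Set.ncard_image_of_injective _ List.cons_injective
  have e4 : T2.ncard = (AvSet A (n - ak) (m - 1)).ncard := by
    rw [hT2, lastSet_eq haA hmax (by omega)]
    exact Set.ncard_image_of_injective _ (List.append_left_injective [ak])
  have e5 : (T1 ∩ T2).ncard = (AvSet A (n - 2 * ak) (m - 2)).ncard := by
    have hinter : T1 ∩ T2
        = AvSet A n m ∩ {σ | σ.getD 0 0 = ak} ∩ {σ | σ.getD (σ.length - 1) 0 = ak} := by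
      rw [hT1, hT2]
      ext σ
      simp only [Set.mem_inter_iff, Set.mem_setOf_eq]
      tauto
    rw [hinter, bothSet_eq haA hmax hm]
    exact Set.ncard_image_of_injective _
      (fun x y h => List.append_left_injective [ak] (List.cons_injective h))
  rw [count121_eq, count121_eq, count121_eq, count121_eq] at *
  omega
end

section
/- Let A be a finite nonempty set of positive integers and let τ = τ₀-φ be a POP whose first block τ₀ is a nonempty consecutive pattern, where φ is an arbitrary POP and every letter of τ₀ is incomparable with every letter of φ. Then in ℚ⟦x,y⟧: C_τ^A(x,y) = C_{τ₀}^A(x,y) + C_φ^A(x,y)·D_{τ₀}^A(x,y). -/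
/-- A composition of `n` with `m` parts, all parts in `A`. -/
def IsCompOf (A : Finset ℕ) (n m : ℕ) (σ : List ℕ) : Prop :=
  (∀ x ∈ σ, x ∈ A) ∧ σ.sum = n ∧ σ.length = m

/-- A partially ordered pattern (POP) over an alphabet `α`: a word partitioned into
`r` consecutive blocks, the `i`-th block having length `len i` and letters
`letters i`. -/
structure POP (α : Type*) where
  r : ℕ
  len : Fin r → ℕ
  letters : (i : Fin r) → Fin (len i) → α

/-- The POP `P` occurs in the composition `σ`: there are contiguous factors of `σ`,
one for each block (the `i`-th starting at `st i`), each ending strictly before the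
next begins, such that the letters of `σ` matched to the letters of the pattern
respect all strict inequalities and equalities of the alphabet. -/
def POPOccurs {α : Type*} [PartialOrder α] (P : POP α) (σ : List ℕ) : Prop :=
  ∃ st : Fin P.r → ℕ,
    (∀ i : Fin P.r, st i + P.len i ≤ σ.length) ∧
    (∀ i j : Fin P.r, i < j → st i + P.len i ≤ st j) ∧
    ∀ (i j : Fin P.r) (s : Fin (P.len i)) (t : Fin (P.len j)),
      (P.letters i s < P.letters j t →
        σ.getD (st i + s) 0 < σ.getD (st j + t) 0) ∧
      (P.letters i s = P.letters j t →
        σ.getD (st i + s) 0 = σ.getD (st j + t) 0)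

/-- An occurrence, starting at position `i`, of the consecutive pattern
`p : Fin ℓ → β` in `σ`. -/
def OccAt {β : Type*} [PartialOrder β] {ℓ : ℕ} (p : Fin ℓ → β)
    (σ : List ℕ) (i : ℕ) : Prop :=
  i + ℓ ≤ σ.length ∧ ∀ s t : Fin ℓ,
    (p s < p t → σ.getD (i + s) 0 < σ.getD (i + t) 0) ∧
    (p s = p t → σ.getD (i + s) 0 = σ.getD (i + t) 0)

/-- `σ` quasi-avoids the consecutive pattern `p`: it has exactly one occurrence of
`p`, consisting of the `ℓ` rightmost letters of `σ`. -/
def QuasiAvoidsPat {β : Type*} [PartialOrder β] {ℓ : ℕ} (p : Fin ℓ → β)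
    (σ : List ℕ) : Prop :=
  {i : ℕ | OccAt p σ i} = {σ.length - ℓ}

/-- An occurrence of the POP `τ₀-φ` in `σ`, where the consecutive pattern `τ₀` and
the POP `φ` have mutually incomparable letters: an occurrence of `τ₀` as a
contiguous factor, ending strictly before the start of an occurrence of `φ` in the
remaining suffix of `σ`. -/
def DashOccurs {β α : Type*} [PartialOrder β] [PartialOrder α] {ℓ : ℕ}
    (p : Fin ℓ → β) (P : POP α) (σ : List ℕ) : Prop :=
  ∃ i : ℕ, OccAt p σ i ∧ POPOccurs P (σ.drop (i + ℓ))

/-!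
Split a composition avoiding `τ₀-φ` according to whether it contains `τ₀`. If it does, cut it
right after the leftmost occurrence of `τ₀`: the prefix quasi-avoids `τ₀`, and the suffix avoids
`φ`, as an occurrence of `φ` there would complete one of `τ₀-φ`. Conversely every such
concatenation avoids `τ₀-φ`, and the cut is recovered as the end of the leftmost occurrence of
`τ₀`. Weight and number of parts are additive under concatenation, so this unique factorisation
becomes the product `C_φ · D_{τ₀}` of generating functions.
-/

open MvPowerSeries

theorem Finsupp.eq_single_zero_add_single_one {M : Type*} [AddZeroClass M] (d : Fin 2 →₀ M) :
    d = Finsupp.single 0 (d 0) + Finsupp.single 1 (d 1) := by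
  ext a; fin_cases a <;> simp

/-- The exponent of `x^n y^m` recording the weight `n` and number of parts `m` of `σ`. -/
noncomputable def compDeg (σ : List ℕ) : Fin 2 →₀ ℕ :=
  Finsupp.single 0 σ.sum + Finsupp.single 1 σ.length

theorem compDeg_apply_zero (σ : List ℕ) : compDeg σ 0 = σ.sum := by simp [compDeg]

theorem compDeg_apply_one (σ : List ℕ) : compDeg σ 1 = σ.length := by simp [compDeg]

theorem compDeg_append (π ρ : List ℕ) : compDeg (π ++ ρ) = compDeg π + compDeg ρ := by
  rw [Finsupp.eq_single_zero_add_single_one (compDeg π + compDeg ρ),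
    Finsupp.eq_single_zero_add_single_one (compDeg (π ++ ρ))]
  simp [compDeg_apply_zero, compDeg_apply_one]

theorem compDeg_eq_iff {σ : List ℕ} {n m : ℕ} :
    compDeg σ = Finsupp.single 0 n + Finsupp.single 1 m ↔ σ.sum = n ∧ σ.length = m := by
  constructor
  · intro h
    exact ⟨by simpa [compDeg_apply_zero] using congrArg (· 0) h,
      by simpa [compDeg_apply_one] using congrArg (· 1) h⟩
  · rintro ⟨rfl, rfl⟩
    rfl

def compsWith (A : Finset ℕ) (P : List ℕ → Prop) (d : Fin 2 →₀ ℕ) : Set (List ℕ) :=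
  {σ | (∀ x ∈ σ, x ∈ A) ∧ compDeg σ = d ∧ P σ}

theorem compsWith_finite (A : Finset ℕ) (P : List ℕ → Prop) (d : Fin 2 →₀ ℕ) :
    (compsWith A P d).Finite := by
  refine ((List.finite_length_eq A (d 1)).image (List.map Subtype.val)).subset ?_
  rintro σ ⟨hA, rfl, -⟩
  exact ⟨σ.pmap Subtype.mk hA, by simp [compDeg_apply_one], by simp [List.map_pmap]⟩

noncomputable def compGenFun (A : Finset ℕ) (P : List ℕ → Prop) : MvPowerSeries (Fin 2) ℚ :=
  fun d => (compsWith A P d).ncard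

section GenFun

open Finset.HasAntidiagonal

variable {A : Finset ℕ} {P Q R : List ℕ → Prop}

theorem coeff_compGenFun (n m : ℕ) :
    coeff (Finsupp.single 0 n + Finsupp.single 1 m) (compGenFun A P)
      = ({σ | IsCompOf A n m σ ∧ P σ}.ncard : ℚ) := by
  simp only [coeff_apply, compGenFun, compsWith, compDeg_eq_iff, IsCompOf, and_assoc]

theorem eq_compGenFun_of_coeff {F : MvPowerSeries (Fin 2) ℚ}
    (h : ∀ n m : ℕ, coeff (Finsupp.single 0 n + Finsupp.single 1 m) F
      = ({σ | IsCompOf A n m σ ∧ P σ}.ncard : ℚ)) :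
    F = compGenFun A P := by
  ext d
  rw [d.eq_single_zero_add_single_one, h, coeff_compGenFun]

theorem compGenFun_eq_add (hR : ∀ σ, R σ ↔ P σ ∨ Q σ) (hPQ : ∀ σ, P σ → ¬ Q σ) :
    compGenFun A R = compGenFun A P + compGenFun A Q := by
  ext d
  have hunion : compsWith A R d = compsWith A P d ∪ compsWith A Q d := by
    ext σ
    simp only [compsWith, hR, Set.mem_ofPred_eq, Set.mem_union]
    tauto
  have hdisj : Disjoint (compsWith A P d) (compsWith A Q d) :=
    Set.disjoint_left.2 fun σ hP hQ => hPQ σ hP.2.2 hQ.2.2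
  simp only [map_add, coeff_apply, compGenFun, hunion,
    Set.ncard_union_eq hdisj (compsWith_finite A P d) (compsWith_finite A Q d), Nat.cast_add]

theorem compGenFun_eq_mul (hR : ∀ σ, R σ ↔ ∃ π ρ, P π ∧ Q ρ ∧ π ++ ρ = σ)
    (hcut : ∀ π₁ ρ₁ π₂ ρ₂, P π₁ → P π₂ → π₁ ++ ρ₁ = π₂ ++ ρ₂ → π₁ = π₂) :
    compGenFun A R = compGenFun A P * compGenFun A Q := by
  ext d
  set pairs : (Fin 2 →₀ ℕ) × (Fin 2 →₀ ℕ) → Set (List ℕ × List ℕ) :=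
    fun x => compsWith A P x.1 ×ˢ compsWith A Q x.2
  have himage : compsWith A R d
      = (fun p => p.1 ++ p.2) '' ⋃ x ∈ (antidiagonal d : Set _), pairs x := by
    ext σ
    simp only [compsWith, pairs, hR, Set.mem_ofPred_eq, Set.mem_image, Set.mem_iUnion,
      Set.mem_prod, Finset.mem_coe, mem_antidiagonal, Prod.exists]
    constructor
    · rintro ⟨hA, rfl, π, ρ, hπ, hρ, rfl⟩
      exact ⟨π, ρ, ⟨compDeg π, compDeg ρ, (compDeg_append π ρ).symm,
        ⟨fun x hx => hA x (List.mem_append_left ρ hx), rfl, hπ⟩,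
        fun x hx => hA x (List.mem_append_right π hx), rfl, hρ⟩, rfl⟩
    · rintro ⟨π, ρ, ⟨a, b, rfl, ⟨hAπ, rfl, hπ⟩, hAρ, rfl, hρ⟩, rfl⟩
      exact ⟨fun x hx => (List.mem_append.1 hx).elim (hAπ x) (hAρ x), compDeg_append π ρ,
        π, ρ, hπ, hρ, rfl⟩
  have hinj : Set.InjOn (fun p : List ℕ × List ℕ => p.1 ++ p.2)
      (⋃ x ∈ (antidiagonal d : Set _), pairs x) := by
    rintro ⟨π₁, ρ₁⟩ h₁ ⟨π₂, ρ₂⟩ h₂ (h : π₁ ++ ρ₁ = π₂ ++ ρ₂)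
    simp only [pairs, compsWith, Set.mem_iUnion, Set.mem_prod, Set.mem_ofPred_eq] at h₁ h₂
    obtain ⟨-, -, ⟨-, -, hπ₁⟩, -⟩ := h₁
    obtain ⟨-, -, ⟨-, -, hπ₂⟩, -⟩ := h₂
    obtain rfl := hcut π₁ ρ₁ π₂ ρ₂ hπ₁ hπ₂ h
    rw [List.append_cancel_left h]
  have hdisj : (antidiagonal d : Set _).PairwiseDisjoint pairs := by
    intro x _ y _ hxy
    refine Set.disjoint_left.2 fun p hx hy => hxy ?_
    exact Prod.ext (hx.1.2.1.symm.trans hy.1.2.1) (hx.2.2.1.symm.trans hy.2.2.1)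
  rw [coeff_mul, coeff_apply, compGenFun, himage, hinj.ncard_image,
    Set.Finite.ncard_biUnion (Finset.finite_toSet _)
      (fun x _ => (compsWith_finite A P x.1).prod (compsWith_finite A Q x.2)) hdisj,
    finsum_mem_coe_finset, Nat.cast_sum]
  refine Finset.sum_congr rfl fun x _ => ?_
  rw [Set.ncard_prod, Nat.cast_mul]
  rfl

end GenFun

section Patterns

variable {β α : Type*} [PartialOrder β] [PartialOrder α] {ℓ : ℕ} {p : Fin ℓ → β}
  {φ : POP α} {σ π ρ : List ℕ} {i : ℕ}

theorem occAt_take_iff {k : ℕ} (h : i + ℓ ≤ k) : OccAt p (σ.take k) i ↔ OccAt p σ i := by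
  have hget : ∀ s : Fin ℓ, (σ.take k).getD (i + s) 0 = σ.getD (i + s) 0 := fun s => by
    simp [List.getD_eq_getElem?_getD, List.getElem?_take_of_lt (by omega : i + (s : ℕ) < k)]
  simp only [OccAt, hget, List.length_take]
  constructor <;> rintro ⟨hlen, hocc⟩ <;> exact ⟨by omega, hocc⟩

theorem occAt_append_iff (h : i + ℓ ≤ π.length) : OccAt p (π ++ ρ) i ↔ OccAt p π i := by
  simpa using (occAt_take_iff (p := p) (σ := π ++ ρ) h).symm

theorem POPOccurs.of_drop {t : ℕ} (ht : t ≤ σ.length) (h : POPOccurs φ (σ.drop t)) :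
    POPOccurs φ σ := by
  obtain ⟨st, hlen, hsep, hocc⟩ := h
  have hget : ∀ j, (σ.drop t).getD j 0 = σ.getD (t + j) 0 := fun j => by
    simp [List.getD_eq_getElem?_getD]
  refine ⟨fun j => t + st j, fun j => ?_, fun j k hjk => ?_, fun j k s u => ?_⟩
  · have := hlen j
    rw [List.length_drop] at this
    dsimp only
    omega
  · have := hsep j k hjk
    dsimp only
    omega
  · simpa only [hget, Nat.add_assoc] using hocc j k s u

theorem QuasiAvoidsPat.occAt (h : QuasiAvoidsPat p π) : OccAt p π (π.length - ℓ) :=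
  (Set.ext_iff.1 h _).2 rfl

theorem QuasiAvoidsPat.eq_of_occAt (h : QuasiAvoidsPat p π) (hi : OccAt p π i) :
    i = π.length - ℓ :=
  (Set.ext_iff.1 h i).1 hi

theorem QuasiAvoidsPat.occAt_append (h : QuasiAvoidsPat p π) :
    OccAt p (π ++ ρ) (π.length - ℓ) :=
  (occAt_append_iff h.occAt.1).2 h.occAt

theorem QuasiAvoidsPat.length_le_of_occAt_append (h : QuasiAvoidsPat p π)
    (hi : OccAt p (π ++ ρ) i) : π.length ≤ i + ℓ := by
  have hℓ := h.occAt.1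
  by_contra hlt
  have := h.eq_of_occAt ((occAt_append_iff (by omega)).1 hi)
  omega

theorem QuasiAvoidsPat.eq_of_append_eq_append {π₁ π₂ ρ₁ ρ₂ : List ℕ} (h₁ : QuasiAvoidsPat p π₁)
    (h₂ : QuasiAvoidsPat p π₂) (h : π₁ ++ ρ₁ = π₂ ++ ρ₂) : π₁ = π₂ := by
  have occ₁ : OccAt p (π₂ ++ ρ₂) (π₁.length - ℓ) := h ▸ h₁.occAt_append
  have occ₂ : OccAt p (π₁ ++ ρ₁) (π₂.length - ℓ) := h ▸ h₂.occAt_append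
  have hℓ₁ := h₁.occAt.1
  have hℓ₂ := h₂.occAt.1
  have := h₁.length_le_of_occAt_append occ₂
  have := h₂.length_le_of_occAt_append occ₁
  exact (List.append_inj h (by omega)).1

theorem not_dashOccurs_append (hπ : QuasiAvoidsPat p π) (hρ : ¬ POPOccurs φ ρ) :
    ¬ DashOccurs p φ (π ++ ρ) := by
  rintro ⟨i, hi, hφ⟩
  have hcut := hπ.length_le_of_occAt_append hi
  have hend := hi.1
  rw [List.length_append] at hend
  rw [show i + ℓ = π.length + (i + ℓ - π.length) by omega, ← List.drop_drop,
    List.drop_left] at hφ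
  exact hρ (hφ.of_drop (by omega))

/-- Cutting after the leftmost occurrence of `p`. -/
theorem exists_append_of_not_dashOccurs (hσ : ¬ DashOccurs p φ σ) (hex : ∃ i, OccAt p σ i) :
    ∃ π ρ, QuasiAvoidsPat p π ∧ ¬ POPOccurs φ ρ ∧ π ++ ρ = σ := by
  classical
  set i₀ := Nat.find hex
  have hi₀ : OccAt p σ i₀ := Nat.find_spec hex
  have hlen : (σ.take (i₀ + ℓ)).length = i₀ + ℓ := by
    rw [List.length_take]
    exact min_eq_left hi₀.1
  refine ⟨σ.take (i₀ + ℓ), σ.drop (i₀ + ℓ), ?_, fun hφ => hσ ⟨i₀, hi₀, hφ⟩,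
    List.take_append_drop _ _⟩
  ext j
  simp only [Set.mem_ofPred_eq, Set.mem_singleton_iff, hlen, Nat.add_sub_cancel]
  constructor
  · intro hj
    have hjℓ := hj.1
    rw [hlen] at hjℓ
    have := Nat.find_min' hex ((occAt_take_iff hjℓ).1 hj)
    omega
  · rintro rfl
    exact (occAt_take_iff le_rfl).2 hi₀

theorem not_dashOccurs_and_exists_occAt_iff :
    (¬ DashOccurs p φ σ ∧ ∃ i, OccAt p σ i) ↔
      ∃ π ρ, QuasiAvoidsPat p π ∧ ¬ POPOccurs φ ρ ∧ π ++ ρ = σ := by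
  constructor
  · exact fun ⟨hσ, hex⟩ => exists_append_of_not_dashOccurs hσ hex
  · rintro ⟨π, ρ, hπ, hρ, rfl⟩
    exact ⟨not_dashOccurs_append hπ hρ, _, hπ.occAt_append⟩

end Patterns

open MvPowerSeries in
theorem stmt4_general {β α : Type*} [PartialOrder β] [PartialOrder α]
    {ℓ : ℕ} (τ₀ : Fin ℓ → β) (φ : POP α)
    (A : Finset ℕ)
    (Cτ C₀ Cφ D₀ : MvPowerSeries (Fin 2) ℚ)
    (hCτ : ∀ n m : ℕ,
      (MvPowerSeries.coeff (Finsupp.single 0 n + Finsupp.single 1 m)) Cτ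
        = (Set.ncard {σ : List ℕ | IsCompOf A n m σ ∧ ¬ DashOccurs τ₀ φ σ} : ℚ))
    (hC₀ : ∀ n m : ℕ,
      (MvPowerSeries.coeff (Finsupp.single 0 n + Finsupp.single 1 m)) C₀
        = (Set.ncard {σ : List ℕ | IsCompOf A n m σ ∧ ∀ i, ¬ OccAt τ₀ σ i} : ℚ))
    (hCφ : ∀ n m : ℕ,
      (MvPowerSeries.coeff (Finsupp.single 0 n + Finsupp.single 1 m)) Cφ
        = (Set.ncard {σ : List ℕ | IsCompOf A n m σ ∧ ¬ POPOccurs φ σ} : ℚ))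
    (hD₀ : ∀ n m : ℕ,
      (MvPowerSeries.coeff (Finsupp.single 0 n + Finsupp.single 1 m)) D₀
        = (Set.ncard {σ : List ℕ | IsCompOf A n m σ ∧ QuasiAvoidsPat τ₀ σ} : ℚ)) :
    Cτ = C₀ + Cφ * D₀ := by
  rw [eq_compGenFun_of_coeff hCτ, eq_compGenFun_of_coeff hC₀, eq_compGenFun_of_coeff hCφ,
    eq_compGenFun_of_coeff hD₀, mul_comm]
  have hsplit : ∀ σ, ¬ DashOccurs τ₀ φ σ ↔
      (∀ i, ¬ OccAt τ₀ σ i) ∨ (¬ DashOccurs τ₀ φ σ ∧ ∃ i, OccAt τ₀ σ i) := fun σ =>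
    ⟨fun h => (em _).elim (fun hex => .inr ⟨h, hex⟩) (fun hex => .inl (not_exists.1 hex)),
      fun h => h.elim (fun h₀ ⟨i, hi, _⟩ => h₀ i hi) And.left⟩
  rw [compGenFun_eq_add hsplit fun σ h₀ h => h.2.elim fun i hi => h₀ i hi,
    compGenFun_eq_mul (fun _ => not_dashOccurs_and_exists_occAt_iff)
      fun _ _ _ _ h₁ h₂ h => h₁.eq_of_append_eq_append h₂ h]

open MvPowerSeries in
theorem stmt4 {β α : Type*} [PartialOrder β] [PartialOrder α]
    {ℓ : ℕ} (hℓ : 0 < ℓ) (τ₀ : Fin ℓ → β) (φ : POP α)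
    (A : Finset ℕ) (hA : A.Nonempty) (hpos : ∀ a ∈ A, 0 < a)
    (Cτ C₀ Cφ D₀ : MvPowerSeries (Fin 2) ℚ)
    (hCτ : ∀ n m : ℕ,
      (MvPowerSeries.coeff (Finsupp.single 0 n + Finsupp.single 1 m)) Cτ
        = (Set.ncard {σ : List ℕ | IsCompOf A n m σ ∧ ¬ DashOccurs τ₀ φ σ} : ℚ))
    (hC₀ : ∀ n m : ℕ,
      (MvPowerSeries.coeff (Finsupp.single 0 n + Finsupp.single 1 m)) C₀
        = (Set.ncard {σ : List ℕ | IsCompOf A n m σ ∧ ∀ i, ¬ OccAt τ₀ σ i} : ℚ))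
    (hCφ : ∀ n m : ℕ,
      (MvPowerSeries.coeff (Finsupp.single 0 n + Finsupp.single 1 m)) Cφ
        = (Set.ncard {σ : List ℕ | IsCompOf A n m σ ∧ ¬ POPOccurs φ σ} : ℚ))
    (hD₀ : ∀ n m : ℕ,
      (MvPowerSeries.coeff (Finsupp.single 0 n + Finsupp.single 1 m)) D₀
        = (Set.ncard {σ : List ℕ | IsCompOf A n m σ ∧ QuasiAvoidsPat τ₀ σ} : ℚ)) :
    Cτ = C₀ + Cφ * D₀ :=
  stmt4_general τ₀ φ A Cτ C₀ Cφ D₀ hCτ hC₀ hCφ hD₀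
end
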